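/- arXiv:2305.18806 — 3 statements merged into one kernel-verified Lean document; each statement's English description precedes it below -/
import Mathlib

section
/- Let k be a symmetric positive semidefinite kernel, X a finite set of points with invertible Gram matrix, and x₀ ∈ X. Then the posterior variance at x* given all of X equals the posterior variance at x* of the process first conditioned on {x₀} and then conditioned on X \ {x₀}; consequently σ(H_X)(x*) ≤ σ(H_{{x₀}})(x*). -/
/-!
Eliminate the `j`-th unknown of the linear system `K α = v` (`K` the Gram matrix, `v` the
covariances with `x*`). What remains is the system `S y = v'` for the Schur complement `S` of the
pivot `K j j`, which is the Gram matrix of the conditioned kernel `k'`, while `v'` is the vector of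
`k'`-covariances. This gives `v ⬝ K⁻¹ v = v j ^ 2 / K j j + v' ⬝ S⁻¹ v'`, which is the first claim
rearranged. `S` is positive definite with `K`, because its quadratic form is that of `K` on
vectors whose pivot coordinate is chosen to annihilate the `j`-th row, so the last term is
nonnegative.
-/

namespace Matrix

variable {ι 𝕜 : Type*} [Field 𝕜]

def pivotSchur (K : Matrix ι ι 𝕜) (j : ι) : Matrix {i // i ≠ j} {i // i ≠ j} 𝕜 :=
  of fun a b => K a b - K a j * K j b / K j j

def pivotResidual (K : Matrix ι ι 𝕜) (j : ι) (v : ι → 𝕜) : {i // i ≠ j} → 𝕜 :=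
  fun a => v a - v j * K j a / K j j

lemma IsSymm.pivotSchur {K : Matrix ι ι 𝕜} (hK : K.IsSymm) (j : ι) : (pivotSchur K j).IsSymm :=
  IsSymm.ext fun a b => by
    simp only [Matrix.pivotSchur, of_apply]
    rw [hK.apply a b, hK.apply j b, hK.apply a j]
    ring

variable [Fintype ι] [DecidableEq ι]

def pivotLift (K : Matrix ι ι 𝕜) (j : ι) (z : {i // i ≠ j} → 𝕜) : ι → 𝕜 :=
  fun i => if h : i = j then -(∑ a : {i // i ≠ j}, K j a * z a) / K j j else z ⟨i, h⟩

section

variable (K : Matrix ι ι 𝕜) (j : ι)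

@[simp]
lemma pivotLift_apply_self (z : {i // i ≠ j} → 𝕜) :
    pivotLift K j z j = -(∑ a : {i // i ≠ j}, K j a * z a) / K j j :=
  dif_pos rfl

@[simp]
lemma pivotLift_apply_val (z : {i // i ≠ j} → 𝕜) (a : {i // i ≠ j}) :
    pivotLift K j z a = z a :=
  dif_neg a.2

lemma sum_mul_pivotLift (f : ι → 𝕜) (z : {i // i ≠ j} → 𝕜) :
    ∑ i, f i * pivotLift K j z i
      = f j * (-(∑ a : {i // i ≠ j}, K j a * z a) / K j j) + ∑ a : {i // i ≠ j}, f a * z a := by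
  rw [Fintype.sum_eq_add_sum_subtype_ne _ j]
  simp only [pivotLift_apply_self, pivotLift_apply_val]

lemma dotProduct_pivotLift (v : ι → 𝕜) (z : {i // i ≠ j} → 𝕜) :
    v ⬝ᵥ pivotLift K j z = pivotResidual K j v ⬝ᵥ z := by
  simp only [dotProduct, sum_mul_pivotLift, pivotResidual, ← Finset.sum_neg_distrib,
    Finset.sum_div, Finset.mul_sum, ← Finset.sum_add_distrib]
  exact Finset.sum_congr rfl fun a _ => by ring

lemma mulVec_pivotLift_apply_self (hj : K j j ≠ 0) (z : {i // i ≠ j} → 𝕜) :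
    (K *ᵥ pivotLift K j z) j = 0 := by
  simp only [mulVec, dotProduct, sum_mul_pivotLift]
  field_simp
  ring

lemma mulVec_pivotLift_apply_val (z : {i // i ≠ j} → 𝕜) (a : {i // i ≠ j}) :
    (K *ᵥ pivotLift K j z) a = (pivotSchur K j *ᵥ z) a := by
  simp only [mulVec, dotProduct, sum_mul_pivotLift, pivotSchur, of_apply,
    ← Finset.sum_neg_distrib, Finset.sum_div, Finset.mul_sum, ← Finset.sum_add_distrib]
  exact Finset.sum_congr rfl fun b _ => by ring

lemma pivotResidual_mulVec_pivotLift (hj : K j j ≠ 0) (z : {i // i ≠ j} → 𝕜) :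
    pivotResidual K j (K *ᵥ pivotLift K j z) = pivotSchur K j *ᵥ z := by
  funext a
  simp only [pivotResidual, mulVec_pivotLift_apply_self K j hj, mulVec_pivotLift_apply_val,
    zero_mul, zero_div, sub_zero]

lemma mulVec_pivotLift_add_single (hK : K.IsSymm) (hj : K j j ≠ 0) {v : ι → 𝕜}
    {y : {i // i ≠ j} → 𝕜} (hy : pivotSchur K j *ᵥ y = pivotResidual K j v) :
    K *ᵥ (pivotLift K j y + Pi.single j (v j / K j j)) = v := by
  funext i
  rw [mulVec_add, Pi.add_apply, mulVec_single, Pi.smul_apply, col_apply, op_smul_eq_mul]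
  by_cases hi : i = j
  · subst hi
    rw [mulVec_pivotLift_apply_self K i hj]
    field_simp
    ring
  · lift i to {i // i ≠ j} using hi
    rw [mulVec_pivotLift_apply_val, hy, pivotResidual, hK.apply]
    ring

theorem dotProduct_inv_mulVec_eq_pivot (hK : K.IsSymm) (hKdet : IsUnit K.det)
    (hSdet : IsUnit (pivotSchur K j).det) (hj : K j j ≠ 0) (v : ι → 𝕜) :
    v ⬝ᵥ K⁻¹ *ᵥ v = v j ^ 2 / K j j
      + pivotResidual K j v ⬝ᵥ (pivotSchur K j)⁻¹ *ᵥ pivotResidual K j v := by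
  set y := (pivotSchur K j)⁻¹ *ᵥ pivotResidual K j v
  have hy : pivotSchur K j *ᵥ y = pivotResidual K j v := by
    rw [mulVec_mulVec, mul_nonsing_inv _ hSdet, one_mulVec]
  have hsol : K⁻¹ *ᵥ v = pivotLift K j y + Pi.single j (v j / K j j) := by
    conv_lhs => rw [← mulVec_pivotLift_add_single K j hK hj hy]
    rw [mulVec_mulVec, nonsing_inv_mul _ hKdet, one_mulVec]
  rw [hsol, dotProduct_add, dotProduct_pivotLift, dotProduct_single]
  ring

lemma pivotLift_dotProduct_mulVec_pivotLift (hj : K j j ≠ 0) (z : {i // i ≠ j} → 𝕜) :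
    pivotLift K j z ⬝ᵥ K *ᵥ pivotLift K j z = z ⬝ᵥ pivotSchur K j *ᵥ z := by
  rw [dotProduct_comm, dotProduct_pivotLift, pivotResidual_mulVec_pivotLift K j hj,
    dotProduct_comm]

end

theorem PosDef.pivotSchur {K : Matrix ι ι ℝ} (hK : K.PosDef) (j : ι) :
    (K.pivotSchur j).PosDef := by
  have hS : (K.pivotSchur j).IsSymm := (isHermitian_iff_isSymm.mp hK.isHermitian).pivotSchur j
  refine PosDef.of_dotProduct_mulVec_pos (isHermitian_iff_isSymm.mpr hS) fun z hz => ?_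
  have hlift : pivotLift K j z ≠ 0 := fun h => hz (funext fun a => by simpa using congrFun h a)
  simpa only [star_trivial, pivotLift_dotProduct_mulVec_pivotLift K j hK.diag_pos.ne'] using
    hK.dotProduct_mulVec_pos hlift

end Matrix

open Matrix

/-- Decomposition of GP conditioning: the posterior variance at `x*` given all points of
`X` equals the posterior variance at `x*` of the process first conditioned on `{x₀}`
(with the conditioned kernel `k'(a,b) = k(a,b) - k(a,x₀)k(x₀,b)/k(x₀,x₀)`) and then
conditioned on `X \ {x₀}`; consequently `σ(H_X)(x*) ≤ σ(H_{x₀})(x*)`. -/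
theorem stmt7 {m n : ℕ} (k : (Fin m → ℝ) → (Fin m → ℝ) → ℝ)
    (hsymm : ∀ x y, k x y = k y x)
    (hpsd : ∀ (N : ℕ) (x : Fin N → (Fin m → ℝ)),
      (Matrix.of fun i j => k (x i) (x j)).PosSemidef)
    (x : Fin n → (Fin m → ℝ)) (j : Fin n)
    (hGram : IsUnit (Matrix.of fun i i' => k (x i) (x i')).det)
    (xs : Fin m → ℝ) :
    let k' : (Fin m → ℝ) → (Fin m → ℝ) → ℝ :=
      fun a b => k a b - k a (x j) * k (x j) b / k (x j) (x j)
    (k xs xs - (fun i => k xs (x i)) ⬝ᵥ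
        (Matrix.of fun i i' => k (x i) (x i'))⁻¹ *ᵥ (fun i => k xs (x i)))
      = k' xs xs - (fun i : {i : Fin n // i ≠ j} => k' xs (x i)) ⬝ᵥ
          (Matrix.of fun (a b : {i : Fin n // i ≠ j}) => k' (x a) (x b))⁻¹ *ᵥ
          (fun i : {i : Fin n // i ≠ j} => k' xs (x i))
    ∧ (k xs xs - (fun i => k xs (x i)) ⬝ᵥ
        (Matrix.of fun i i' => k (x i) (x i'))⁻¹ *ᵥ (fun i => k xs (x i)))
        ≤ k xs xs - (k xs (x j)) ^ 2 / k (x j) (x j) := by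
  intro k'
  set K : Matrix (Fin n) (Fin n) ℝ := of fun i i' => k (x i) (x i')
  set v : Fin n → ℝ := fun i => k xs (x i)
  have hK : K.PosDef := (hpsd n x).posDef_iff_det_ne_zero.mpr hGram.ne_zero
  have hS : (pivotSchur K j).PosDef := hK.pivotSchur j
  have hdecomp := dotProduct_inv_mulVec_eq_pivot K j (isHermitian_iff_isSymm.mp hK.isHermitian)
    hGram ((isUnit_iff_isUnit_det _).mp hS.isUnit) hK.diag_pos.ne' v
  have hnonneg : 0 ≤ pivotResidual K j v ⬝ᵥ (pivotSchur K j)⁻¹ *ᵥ pivotResidual K j v := by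
    simpa using hS.inv.posSemidef.dotProduct_mulVec_nonneg (pivotResidual K j v)
  change k xs xs - v ⬝ᵥ K⁻¹ *ᵥ v
      = k' xs xs - pivotResidual K j v ⬝ᵥ (pivotSchur K j)⁻¹ *ᵥ pivotResidual K j v ∧
    k xs xs - v ⬝ᵥ K⁻¹ *ᵥ v ≤ k xs xs - v j ^ 2 / K j j
  have hk' : k' xs xs = k xs xs - v j ^ 2 / K j j := by
    simp only [k', v, K, of_apply, hsymm (x j) xs, sq]
  rw [hdecomp, hk']
  constructor <;> linarith
end

section
/- GP posterior variance is monotone in the dataset: if X ⊆ X' are finite sets of points with invertible Gram matrices k(X,X) and k(X',X'), then for every x*, σ(H_{X'})(x*) ≤ σ(H_X)(x*), where σ(H_X)(x*) = k(x*,x*) - k(x*,X)ᵀ k(X,X)⁻¹ k(X,x*). -/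
/-!
The quadratic form `v ⬝ᵥ K⁻¹ *ᵥ v` of an invertible positive semidefinite matrix is the maximum of
`2 (w ⬝ᵥ v) - w ⬝ᵥ K *ᵥ w` over all `w`. Extending a maximiser for a principal submatrix by zero gives a
competitor for the whole matrix with the same value, so enlarging the conditioning set can only
increase `k(x*, X)ᵀ k(X, X)⁻¹ k(X, x*)`, i.e. decrease the posterior variance.
-/

open Matrix Function

namespace Matrix

section Extend

variable {ι ι' R : Type*} [Fintype ι] [Fintype ι'] [CommSemiring R] {e : ι → ι'}

theorem extend_zero_dotProduct (he : Injective e) (w : ι → R) (v : ι' → R) :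
    extend e w 0 ⬝ᵥ v = w ⬝ᵥ (v ∘ e) :=
  (Fintype.sum_of_injective e he _ _
    (fun j hj => by simp [extend_apply' _ _ _ fun ⟨i, hi⟩ => hj ⟨i, hi⟩])
    (fun i => by simp [he.extend_apply])).symm

theorem extend_zero_dotProduct_mulVec (he : Injective e) (K : Matrix ι' ι' R) (w : ι → R) :
    extend e w 0 ⬝ᵥ K *ᵥ extend e w 0 = w ⬝ᵥ K.submatrix e e *ᵥ w := by
  rw [extend_zero_dotProduct he]
  refine congrArg (w ⬝ᵥ ·) (funext fun i => ?_)
  change K (e i) ⬝ᵥ extend e w 0 = (fun j => K (e i) (e j)) ⬝ᵥ w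
  rw [dotProduct_comm, extend_zero_dotProduct he, dotProduct_comm]
  rfl

end Extend

variable {ι ι' : Type*} [Fintype ι] [DecidableEq ι] [Fintype ι'] [DecidableEq ι']

theorem PosSemidef.isGreatest_two_mul_dotProduct_sub {K : Matrix ι ι ℝ} (hK : K.PosSemidef)
    (hdet : IsUnit K.det) (v : ι → ℝ) :
    IsGreatest (Set.range fun w => 2 * (w ⬝ᵥ v) - w ⬝ᵥ K *ᵥ w) (v ⬝ᵥ K⁻¹ *ᵥ v) := by
  have hKu : K *ᵥ (K⁻¹ *ᵥ v) = v := by rw [mulVec_mulVec, mul_nonsing_inv _ hdet, one_mulVec]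
  set u := K⁻¹ *ᵥ v
  have huv : u ⬝ᵥ v = v ⬝ᵥ u := dotProduct_comm _ _
  refine ⟨⟨u, by dsimp only; rw [hKu, huv]; ring⟩, ?_⟩
  rintro _ ⟨w, rfl⟩
  dsimp only
  have hKt : Kᵀ = K := isHermitian_iff_isSymm.mp hK.isHermitian
  have huKw : u ⬝ᵥ K *ᵥ w = w ⬝ᵥ v := by
    rw [dotProduct_mulVec, ← hKt, vecMul_transpose, hKu, dotProduct_comm]
  have hexpand : (w - u) ⬝ᵥ K *ᵥ (w - u) = w ⬝ᵥ K *ᵥ w - 2 * (w ⬝ᵥ v) + v ⬝ᵥ u := by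
    simp only [mulVec_sub, dotProduct_sub, sub_dotProduct, hKu, huKw, huv]
    ring
  have hnonneg := hK.dotProduct_mulVec_nonneg (w - u)
  rw [star_trivial, hexpand] at hnonneg
  linarith

theorem PosSemidef.dotProduct_inv_mulVec_submatrix_le {K : Matrix ι' ι' ℝ} (hK : K.PosSemidef)
    (hdet : IsUnit K.det) {e : ι → ι'} (he : Injective e) (hdet' : IsUnit (K.submatrix e e).det)
    (v : ι' → ℝ) : (v ∘ e) ⬝ᵥ (K.submatrix e e)⁻¹ *ᵥ (v ∘ e) ≤ v ⬝ᵥ K⁻¹ *ᵥ v := by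
  obtain ⟨⟨w, hw⟩, -⟩ := (hK.submatrix e).isGreatest_two_mul_dotProduct_sub hdet' (v ∘ e)
  dsimp only at hw
  rw [← hw, ← extend_zero_dotProduct he, ← extend_zero_dotProduct_mulVec he]
  exact (hK.isGreatest_two_mul_dotProduct_sub hdet v).2 ⟨_, rfl⟩

end Matrix

theorem posSemidef_gram_of_forall_fin {α ι : Type*} [Fintype ι] {k : α → α → ℝ}
    (hpsd : ∀ (N : ℕ) (x : Fin N → α), (Matrix.of fun i j => k (x i) (x j)).PosSemidef)
    (x : ι → α) : (Matrix.of fun i j => k (x i) (x j)).PosSemidef := by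
  classical
  let e := Fintype.equivFin ι
  simpa [Matrix.submatrix] using (hpsd _ (x ∘ e.symm)).submatrix e

theorem stmt8_general {m n : ℕ} (k : (Fin m → ℝ) → (Fin m → ℝ) → ℝ)
    (hpsd : ∀ (N : ℕ) (x : Fin N → (Fin m → ℝ)),
      (Matrix.of fun i j => k (x i) (x j)).PosSemidef)
    (x : Fin n → (Fin m → ℝ)) (s s' : Finset (Fin n)) (hss : s ⊆ s')
    (hGram : IsUnit (Matrix.of fun (i i' : ↥s) => k (x i) (x i')).det)
    (hGram' : IsUnit (Matrix.of fun (i i' : ↥s') => k (x i) (x i')).det)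
    (xs : Fin m → ℝ) :
    k xs xs - (fun i : ↥s' => k xs (x i)) ⬝ᵥ
        (Matrix.of fun (i i' : ↥s') => k (x i) (x i'))⁻¹ *ᵥ (fun i : ↥s' => k xs (x i))
      ≤ k xs xs - (fun i : ↥s => k xs (x i)) ⬝ᵥ
        (Matrix.of fun (i i' : ↥s) => k (x i) (x i'))⁻¹ *ᵥ (fun i : ↥s => k xs (x i)) := by
  have hinj : Injective (Set.inclusion (Finset.coe_subset.mpr hss)) := Set.inclusion_injective _
  exact sub_le_sub_left ((posSemidef_gram_of_forall_fin hpsd _).dotProduct_inv_mulVec_submatrix_le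
    hGram' hinj hGram _) _

/-- Monotonicity of GP posterior variance in the dataset: if `X ⊆ X'` (both with
invertible Gram matrices), then `σ(H_{X'})(x*) ≤ σ(H_X)(x*)`, where
`σ(H_X)(x*) = k(x*,x*) - k(x*,X)ᵀ k(X,X)⁻¹ k(X,x*)`. -/
theorem stmt8 {m n : ℕ} (k : (Fin m → ℝ) → (Fin m → ℝ) → ℝ)
    (hsymm : ∀ x y, k x y = k y x)
    (hpsd : ∀ (N : ℕ) (x : Fin N → (Fin m → ℝ)),
      (Matrix.of fun i j => k (x i) (x j)).PosSemidef)
    (x : Fin n → (Fin m → ℝ)) (s s' : Finset (Fin n)) (hss : s ⊆ s')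
    (hGram : IsUnit (Matrix.of fun (i i' : ↥s) => k (x i) (x i')).det)
    (hGram' : IsUnit (Matrix.of fun (i i' : ↥s') => k (x i) (x i')).det)
    (xs : Fin m → ℝ) :
    k xs xs - (fun i : ↥s' => k xs (x i)) ⬝ᵥ
        (Matrix.of fun (i i' : ↥s') => k (x i) (x i'))⁻¹ *ᵥ (fun i : ↥s' => k xs (x i))
      ≤ k xs xs - (fun i : ↥s => k xs (x i)) ⬝ᵥ
        (Matrix.of fun (i i' : ↥s) => k (x i) (x i'))⁻¹ *ᵥ (fun i : ↥s => k xs (x i)) :=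
  stmt8_general k hpsd x s s' hss hGram hGram' xs
end

section
/- Let k be a continuous symmetric positive semidefinite kernel on a compact set S ⊆ ℝᵐ with k(x,x) > 0 for all x ∈ S, and let (xₙ) be a sequence of points whose closure contains the support of a point x* (i.e., x* is a limit point of (xₙ)). Then the posterior variances σ(H_{X_N})(x*) given X_N = {x₁,…,x_N} (assuming invertible Gram matrices) converge to 0 as N → ∞. -/
/-!
By the variational formula `κᵀK⁻¹κ = sup_c (2 κ·c - cᵀKc)`, the posterior variance at `x*`
given any data set containing a point `x₀` is at most
`ψ(x₀) = k(x*,x*) - k(x*,x₀)² / k(x₀,x₀)`, the variance given `x₀` alone. Positive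
semidefiniteness of the Gram matrix of the data together with `x*` makes the variance
nonnegative, and `ψ` is continuous at `x*` with `ψ(x*) = 0`; so once the data contain a
point close enough to `x*`, the variance is squeezed below any `ε > 0`.
-/

open Matrix Filter Topology

theorem Matrix.PosSemidef.two_mul_dotProduct_sub_le {n : Type*} [Fintype n] [DecidableEq n]
    {K : Matrix n n ℝ} (hK : K.PosSemidef) (hdet : IsUnit K.det) (κ c : n → ℝ) :
    2 * (κ ⬝ᵥ c) - c ⬝ᵥ K *ᵥ c ≤ κ ⬝ᵥ K⁻¹ *ᵥ κ := by
  set a := K⁻¹ *ᵥ κ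
  have hKa : K *ᵥ a = κ := by rw [mulVec_mulVec, mul_nonsing_inv _ hdet, one_mulVec]
  have haK : a ⬝ᵥ K *ᵥ c = κ ⬝ᵥ c := by
    rw [dotProduct_mulVec, ← mulVec_transpose, ← conjTranspose_eq_transpose_of_trivial, hK.1, hKa]
  have h := hK.dotProduct_mulVec_nonneg (c - a)
  simp only [star_trivial, mulVec_sub, dotProduct_sub, sub_dotProduct, hKa, haK,
    dotProduct_comm c κ, dotProduct_comm a κ] at h
  linarith

namespace GaussianProcess

variable {α : Type*}

def gram (k : α → α → ℝ) {N : ℕ} (X : Fin N → α) : Matrix (Fin N) (Fin N) ℝ :=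
  Matrix.of fun i j => k (X i) (X j)

noncomputable def posteriorVariance (k : α → α → ℝ) {N : ℕ} (X : Fin N → α) (z : α) : ℝ :=
  k z z - (fun i => k z (X i)) ⬝ᵥ (gram k X)⁻¹ *ᵥ (fun i => k z (X i))

variable {k : α → α → ℝ}

theorem gram_apply {N : ℕ} (X : Fin N → α) (i j : Fin N) : gram k X i j = k (X i) (X j) := rfl

theorem posteriorVariance_nonneg {N : ℕ} {X : Fin N → α} {z : α}
    (hpsd : (gram k (vecCons z X)).PosSemidef) (hdet : IsUnit (gram k X).det) :
    0 ≤ posteriorVariance k X z := by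
  set κ : Fin N → ℝ := fun i => k z (X i)
  set b := (gram k X)⁻¹ *ᵥ κ
  have hKb : gram k X *ᵥ b = κ := by rw [mulVec_mulVec, mul_nonsing_inv _ hdet, one_mulVec]
  have hsymm (i : Fin N) : k (X i) z = k z (X i) := by
    simpa [gram_apply] using congrFun (congrFun hpsd.1 0) i.succ
  -- `b = K⁻¹κ` annihilates every data row, so `(1, -b)` sees only the `x*` row
  have hGw : gram k (vecCons z X) *ᵥ vecCons 1 (-b) = vecCons (posteriorVariance k X z) 0 := by
    refine funext (Fin.cases ?_ fun i => ?_)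
    · simp [mulVec, gram_apply, posteriorVariance, κ, b, vecHead, vecTail, sub_eq_add_neg,
        Function.comp_def]
    · have hKbi : (fun j => k (X i) (X j)) ⬝ᵥ b = k z (X i) := congrFun hKb i
      simp [mulVec, gram_apply, vecHead, vecTail, Function.comp_def, hsymm, hKbi]
  have h := hpsd.dotProduct_mulVec_nonneg (vecCons 1 (-b))
  rw [star_trivial, hGw, cons_dotProduct_cons, dotProduct_zero] at h
  simpa using h

theorem posteriorVariance_le {N : ℕ} {X : Fin N → α} (z : α) (hpsd : (gram k X).PosSemidef)
    (hdet : IsUnit (gram k X).det) (j : Fin N) :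
    posteriorVariance k X z ≤ k z z - k z (X j) ^ 2 / k (X j) (X j) := by
  have h := hpsd.two_mul_dotProduct_sub_le hdet (fun i => k z (X i))
    (Pi.single j (k z (X j) / k (X j) (X j)))
  simp only [mulVec_single, single_dotProduct, dotProduct_single, Pi.smul_apply, col_apply,
    op_smul_eq_mul, gram_apply] at h
  set a := k z (X j)
  set d := k (X j) (X j)
  have hopt : 2 * (a * (a / d)) - a / d * (d * (a / d)) = a ^ 2 / d := by
    rcases eq_or_ne d 0 with hd | hd
    · simp [hd]
    · field_simp; ring
  rw [posteriorVariance]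
  linarith

theorem tendsto_sub_sq_div_nhdsWithin [TopologicalSpace α] {S : Set α} {z : α}
    (hcont : ContinuousOn (fun p : α × α => k p.1 p.2) (S ×ˢ S)) (hz : z ∈ S) (hzz : k z z ≠ 0) :
    Tendsto (fun y => k z z - k z y ^ 2 / k y y) (𝓝[S] z) (𝓝 0) := by
  have hleft : ContinuousWithinAt (k z) S z :=
    (hcont.comp (continuousOn_const.prodMk continuousOn_id) fun _ hy => ⟨hz, hy⟩) z hz
  have hdiag : ContinuousWithinAt (fun y => k y y) S z :=
    (hcont.comp (continuousOn_id.prodMk continuousOn_id) fun _ hy => ⟨hy, hy⟩) z hz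
  have h : ContinuousWithinAt (fun y => k z z - k z y ^ 2 / k y y) S z :=
    continuousWithinAt_const.sub ((hleft.pow 2).div hdiag hzz)
  rwa [ContinuousWithinAt, sq, mul_div_assoc, div_self hzz, mul_one, sub_self] at h

end GaussianProcess

open GaussianProcess in
theorem stmt9_general {m : ℕ} (S : Set (Fin m → ℝ))
    (k : (Fin m → ℝ) → (Fin m → ℝ) → ℝ)
    (hcont : ContinuousOn (fun p : (Fin m → ℝ) × (Fin m → ℝ) => k p.1 p.2) (S ×ˢ S))
    (hpsd : ∀ (N : ℕ) (x : Fin N → (Fin m → ℝ)),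
      (Matrix.of fun i j => k (x i) (x j)).PosSemidef)
    (hpos : ∀ x ∈ S, 0 < k x x)
    (x : ℕ → (Fin m → ℝ)) (hx : ∀ i, x i ∈ S)
    (xs : Fin m → ℝ) (hxs : xs ∈ S)
    (hlim : ∀ δ > 0, ∀ N : ℕ, ∃ i ≥ N, dist (x i) xs < δ)
    (hGram : ∀ N : ℕ, IsUnit (Matrix.of fun (i i' : Fin N) => k (x i) (x i')).det) :
    Tendsto (fun N : ℕ =>
        k xs xs - (fun i : Fin N => k xs (x i)) ⬝ᵥ
          (Matrix.of fun (i i' : Fin N) => k (x i) (x i'))⁻¹ *ᵥ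
          (fun i : Fin N => k xs (x i)))
      atTop (nhds 0) := by
  change Tendsto (fun N : ℕ => posteriorVariance k (fun i : Fin N => x i) xs) atTop (𝓝 0)
  refine tendsto_order.2 ⟨fun a ha => .of_forall fun N =>
    ha.trans_le (posteriorVariance_nonneg (hpsd _ _) (hGram N)), fun ε hε => ?_⟩
  obtain ⟨δ, hδ, hclose⟩ := Metric.tendsto_nhdsWithin_nhds.1
    (tendsto_sub_sq_div_nhdsWithin hcont hxs (hpos xs hxs).ne') ε hε
  obtain ⟨i, -, hi⟩ := hlim δ hδ 0
  filter_upwards [eventually_gt_atTop i] with N hN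
  calc posteriorVariance k (fun i : Fin N => x i) xs
      ≤ k xs xs - k xs (x i) ^ 2 / k (x i) (x i) :=
        posteriorVariance_le xs (hpsd _ _) (hGram N) ⟨i, hN⟩
    _ < ε := lt_of_abs_lt (Real.dist_0_eq_abs _ ▸ hclose (hx i) hi)

/-- Vanishing posterior variance at in-distribution points: for a continuous symmetric
PSD kernel on a compact set `S` with positive diagonal, if `x*` is a limit point of the
sequence of data points `(xₙ) ⊆ S` (and all Gram matrices are invertible), then the
GP posterior variances `σ(H_{X_N})(x*)` converge to `0` as `N → ∞`. -/
theorem stmt9 {m : ℕ} (S : Set (Fin m → ℝ)) (hS : IsCompact S)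
    (k : (Fin m → ℝ) → (Fin m → ℝ) → ℝ)
    (hcont : ContinuousOn (fun p : (Fin m → ℝ) × (Fin m → ℝ) => k p.1 p.2) (S ×ˢ S))
    (hsymm : ∀ x y, k x y = k y x)
    (hpsd : ∀ (N : ℕ) (x : Fin N → (Fin m → ℝ)),
      (Matrix.of fun i j => k (x i) (x j)).PosSemidef)
    (hpos : ∀ x ∈ S, 0 < k x x)
    (x : ℕ → (Fin m → ℝ)) (hx : ∀ i, x i ∈ S)
    (xs : Fin m → ℝ) (hxs : xs ∈ S)
    (hlim : ∀ δ > 0, ∀ N : ℕ, ∃ i ≥ N, dist (x i) xs < δ)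
    (hGram : ∀ N : ℕ, IsUnit (Matrix.of fun (i i' : Fin N) => k (x i) (x i')).det) :
    Tendsto (fun N : ℕ =>
        k xs xs - (fun i : Fin N => k xs (x i)) ⬝ᵥ
          (Matrix.of fun (i i' : Fin N) => k (x i) (x i'))⁻¹ *ᵥ
          (fun i : Fin N => k xs (x i)))
      atTop (nhds 0) :=
  stmt9_general S k hcont hpsd hpos x hx xs hxs hlim hGram
end
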